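/- arXiv:2005.14347 — 4 statements merged into one kernel-verified Lean document; each statement's English description precedes it below -/
import Mathlib

section
/- The map Υ((A,(Q_i,a_i)_i), (P,(p_i)_i)) := (PA, (a_i^{-1} R_{PA} Q_iᵀ R_Pᵀ (p_i − x_P) + x_{PA})_i) is a right group action of VSLAM_n(3) on the reduced total space T̊_n(3) = { (P, p₁,...,pₙ) ∈ SE(3) × (ℝ³)ⁿ : p_i ≠ x_P for all i }. -/
open Matrix Filter

noncomputable section

/-- The skew-symmetric matrix `v^×` of a vector `v ∈ ℝ³`. -/
def skew (v : Fin 3 → ℝ) : Matrix (Fin 3) (Fin 3) ℝ :=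
  !![0, -v 2, v 1; v 2, 0, -v 0; -v 1, v 0, 0]

/-- The cross product on ℝ³. -/
def cross3 (u v : Fin 3 → ℝ) : Fin 3 → ℝ :=
  ![u 1 * v 2 - u 2 * v 1, u 2 * v 0 - u 0 * v 2, u 0 * v 1 - u 1 * v 0]

/-- `Q` is a rotation matrix (element of SO(3)). -/
def IsRot (Q : Matrix (Fin 3) (Fin 3) ℝ) : Prop := Q * Qᵀ = 1 ∧ Q.det = 1

/-- An element of SE(3), recorded by its rotation and translation parts,
corresponding to the 4×4 matrix [[R, x],[0,1]]. -/
structure SE3 where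
  R : Matrix (Fin 3) (Fin 3) ℝ
  x : Fin 3 → ℝ

/-- Multiplication in SE(3) (matrix multiplication of the 4×4 representatives). -/
def SE3.mul (P A : SE3) : SE3 := ⟨P.R * A.R, P.R.mulVec A.x + P.x⟩

/-- The identity of SE(3). -/
def SE3.one : SE3 := ⟨1, 0⟩

/-- The inverse in SE(3). -/
def SE3.inv (P : SE3) : SE3 := ⟨P.Rᵀ, -(P.Rᵀ.mulVec P.x)⟩

/-- Membership in SE(3): the rotation part is in SO(3). -/
def SE3.IsValid (P : SE3) : Prop := IsRot P.R

/-- A raw element of VSLAM_n(3) = SE(3) × (SO(3) × ℝ_{>0})^n. -/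
structure VSLAM (n : ℕ) where
  A : SE3
  Q : Fin n → Matrix (Fin 3) (Fin 3) ℝ
  a : Fin n → ℝ

/-- Componentwise multiplication on VSLAM_n(3). -/
def VSLAM.mul {n : ℕ} (X Y : VSLAM n) : VSLAM n :=
  ⟨X.A.mul Y.A, fun i => X.Q i * Y.Q i, fun i => X.a i * Y.a i⟩

/-- The identity element of VSLAM_n(3). -/
def VSLAM.one (n : ℕ) : VSLAM n := ⟨SE3.one, fun _ => 1, fun _ => 1⟩

/-- The componentwise inverse on VSLAM_n(3). -/
def VSLAM.inv {n : ℕ} (X : VSLAM n) : VSLAM n :=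
  ⟨X.A.inv, fun i => (X.Q i)ᵀ, fun i => (X.a i)⁻¹⟩

/-- Membership in VSLAM_n(3): SE(3), SO(3) and positivity constraints. -/
def VSLAM.IsValid {n : ℕ} (X : VSLAM n) : Prop :=
  X.A.IsValid ∧ (∀ i, IsRot (X.Q i)) ∧ (∀ i, 0 < X.a i)

/-- A raw element of the output space N_n(3) = (S² × ℝ_{>0})^n. -/
structure Output (n : ℕ) where
  y : Fin n → Fin 3 → ℝ
  z : Fin n → ℝ

/-- Membership in N_n(3): unit bearings and positive inverse depths. -/
def Output.IsValid {n : ℕ} (ξ : Output n) : Prop :=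
  (∀ i, ∑ j, ξ.y i j ^ 2 = 1) ∧ (∀ i, 0 < ξ.z i)

/-- The action ρ of VSLAM_n(3) on the output space:
ρ((A,(Q_i,a_i)_i), ((y_i,z_i)_i)) = ((Q_iᵀ y_i, a_i z_i)_i). -/
def rhoAct {n : ℕ} (X : VSLAM n) (ξ : Output n) : Output n :=
  ⟨fun i => ((X.Q i)ᵀ).mulVec (ξ.y i), fun i => X.a i * ξ.z i⟩

/-- A raw element of the total space T_n(3) = SE(3) × (ℝ³)^n. -/
structure Config (n : ℕ) where
  P : SE3
  p : Fin n → Fin 3 → ℝ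

/-- Membership in the reduced total space T̊_n(3): p_i ≠ x_P for all i. -/
def Config.IsValid {n : ℕ} (Ξ : Config n) : Prop :=
  Ξ.P.IsValid ∧ ∀ i, Ξ.p i ≠ Ξ.P.x

/-- The action Υ of VSLAM_n(3) on the reduced total space:
Υ((A,(Q_i,a_i)_i),(P,(p_i)_i)) = (PA, (a_i⁻¹ R_{PA} Q_iᵀ R_Pᵀ (p_i − x_P) + x_{PA})_i). -/
def Upsilon {n : ℕ} (X : VSLAM n) (Ξ : Config n) : Config n :=
  ⟨Ξ.P.mul X.A,
    fun i => (X.a i)⁻¹ •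
        ((Ξ.P.mul X.A).R * (X.Q i)ᵀ * (Ξ.P.R)ᵀ).mulVec (Ξ.p i - Ξ.P.x)
      + (Ξ.P.mul X.A).x⟩

/-- The Euclidean norm on ℝ³. -/
def enorm3 (v : Fin 3 → ℝ) : ℝ := Real.sqrt (∑ j, v j ^ 2)

/-- The output map h: bearings and inverse depths of the landmarks. -/
def houtput {n : ℕ} (Ξ : Config n) : Output n :=
  ⟨fun i => (enorm3 (Ξ.p i - Ξ.P.x))⁻¹ • ((Ξ.P.R)ᵀ).mulVec (Ξ.p i - Ξ.P.x),
   fun i => (enorm3 (Ξ.p i - Ξ.P.x))⁻¹⟩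

/-- The bearing y(t) = R_P(t)ᵀ (p − x_P(t)) / |p − x_P(t)| of a static landmark. -/
def bearing (R : ℝ → Matrix (Fin 3) (Fin 3) ℝ) (x : ℝ → Fin 3 → ℝ)
    (p : Fin 3 → ℝ) (t : ℝ) : Fin 3 → ℝ :=
  (enorm3 (p - x t))⁻¹ • ((R t)ᵀ).mulVec (p - x t)

/-- The inverse depth z(t) = |p − x_P(t)|⁻¹ of a static landmark. -/
def invDepth (x : ℝ → Fin 3 → ℝ) (p : Fin 3 → ℝ) (t : ℝ) : ℝ :=
  (enorm3 (p - x t))⁻¹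

lemma IsRot.mul' {P Q : Matrix (Fin 3) (Fin 3) ℝ} (hP : IsRot P) (hQ : IsRot Q) :
    IsRot (P * Q) := by
  constructor
  · rw [transpose_mul, mul_assoc, ← mul_assoc Q, hQ.1, one_mul, hP.1]
  · rw [det_mul, hP.2, hQ.2, one_mul]

lemma IsRot.left_inv {Q : Matrix (Fin 3) (Fin 3) ℝ} (hQ : IsRot Q) : Qᵀ * Q = 1 :=
  mul_eq_one_comm.mp hQ.1

lemma IsRot.mulVec_ne_zero {Q : Matrix (Fin 3) (Fin 3) ℝ} (hQ : IsRot Q)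
    {v : Fin 3 → ℝ} (hv : v ≠ 0) : Q.mulVec v ≠ 0 := by
  intro h
  apply hv
  have : (Qᵀ * Q).mulVec v = Qᵀ.mulVec (Q.mulVec v) := (mulVec_mulVec _ _ _).symm
  rw [hQ.left_inv, one_mulVec, h, mulVec_zero] at this
  exact this

/-- Υ is a right group action of VSLAM_n(3) on the reduced total
space T̊_n(3): identity, compatibility, and the image remains in T̊_n(3). -/
theorem upsilon_is_right_action (n : ℕ) :
    (∀ Ξ : Config n, Ξ.IsValid → Upsilon (VSLAM.one n) Ξ = Ξ) ∧
    (∀ X₁ X₂ : VSLAM n, ∀ Ξ : Config n, X₁.IsValid → X₂.IsValid → Ξ.IsValid →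
      Upsilon X₂ (Upsilon X₁ Ξ) = Upsilon (X₁.mul X₂) Ξ) ∧
    (∀ X : VSLAM n, ∀ Ξ : Config n, X.IsValid → Ξ.IsValid → (Upsilon X Ξ).IsValid) := by
  refine ⟨?_, ?_, ?_⟩
  · rintro ⟨⟨R, x⟩, p⟩ ⟨hP, hp⟩
    simp only [Upsilon, VSLAM.one, SE3.mul, SE3.one, Config.mk.injEq, SE3.mk.injEq]
    refine ⟨⟨mul_one R, by simp⟩, funext fun i => ?_⟩
    simp only [transpose_one, mul_one, mulVec_zero, zero_add, inv_one, one_smul]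
    rw [hP.1, one_mulVec, sub_add_cancel]
  · rintro X₁ X₂ ⟨⟨R, x⟩, p⟩ hX₁ hX₂ ⟨hP, hp⟩
    have hR1 : IsRot (R * X₁.A.R) := hP.mul' hX₁.1
    simp only [Upsilon, VSLAM.mul, SE3.mul, Config.mk.injEq, SE3.mk.injEq]
    refine ⟨⟨by rw [mul_assoc], by rw [mulVec_add, ← mulVec_mulVec, add_assoc]⟩,
      funext fun i => ?_⟩
    simp only [add_sub_cancel_right]
    rw [mulVec_smul, smul_smul, mul_comm (X₂.a i)⁻¹, ← mul_inv]
    congr 1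
    rw [mulVec_mulVec]
    congr 1
    have : R * X₁.A.R * X₂.A.R * (X₂.Q i)ᵀ * (R * X₁.A.R)ᵀ * (R * X₁.A.R * (X₁.Q i)ᵀ * Rᵀ)
        = R * X₁.A.R * X₂.A.R * (X₂.Q i)ᵀ * ((R * X₁.A.R)ᵀ * (R * X₁.A.R)) * (X₁.Q i)ᵀ * Rᵀ := by
      simp only [Matrix.mul_assoc]
    rw [this, hR1.left_inv]
    · simp only [transpose_mul, Matrix.mul_assoc, Matrix.mul_one]
    · rw [mulVec_add, ← mulVec_mulVec, add_assoc]
  · rintro X ⟨⟨R, x⟩, p⟩ hX ⟨hP, hp⟩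
    refine ⟨hP.mul' hX.1, fun i => ?_⟩
    have hQt : IsRot (X.Q i)ᵀ :=
      ⟨by rw [transpose_transpose, mul_eq_one_comm.mp (hX.2.1 i).1],
       by rw [det_transpose, (hX.2.1 i).2]⟩
    have hRt : IsRot Rᵀ :=
      ⟨by rw [transpose_transpose, mul_eq_one_comm.mp hP.1], by rw [det_transpose, hP.2]⟩
    have hM : IsRot (R * X.A.R * (X.Q i)ᵀ * Rᵀ) := ((hP.mul' hX.1).mul' hQt).mul' hRt
    simp only [Upsilon, SE3.mul, ne_eq]
    intro h
    have h2 : (X.a i)⁻¹ • (R * X.A.R * (X.Q i)ᵀ * Rᵀ).mulVec (p i - x) = 0 :=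
      add_eq_right.mp h
    rcases smul_eq_zero.mp h2 with h3 | h3
    · exact (inv_ne_zero (ne_of_gt (hX.2.2 i))) h3
    · exact hM.mulVec_ne_zero (sub_ne_zero.mpr (hp i)) h3
end
end

section
/- The output map h defined by h_i(P,(p_j)_j) = (R_Pᵀ(p_i − x_P)/|p_i − x_P|, |p_i − x_P|^{-1}) is equivariant with respect to the actions Υ on the reduced total space and ρ on the output space: for all X ∈ VSLAM_n(3) and Ξ ∈ T̊_n(3), ρ(X, h(Ξ)) = h(Υ(X, Ξ)). -/
open Matrix Filter

noncomputable section

lemma enorm3_mulVec_rot (M : Matrix (Fin 3) (Fin 3) ℝ) (h : Mᵀ * M = 1)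
    (v : Fin 3 → ℝ) : enorm3 (M.mulVec v) = enorm3 v := by
  unfold enorm3
  congr 1
  have h1 : ∀ w : Fin 3 → ℝ, ∑ j, w j ^ 2 = w ⬝ᵥ w := by
    intro w; simp [dotProduct, sq]
  rw [h1, h1, Matrix.dotProduct_mulVec, ← Matrix.mulVec_transpose,
    Matrix.mulVec_mulVec, h, Matrix.one_mulVec]

lemma enorm3_smul (c : ℝ) (v : Fin 3 → ℝ) :
    enorm3 (c • v) = |c| * enorm3 v := by
  unfold enorm3
  have : ∑ j, (c • v) j ^ 2 = c ^ 2 * ∑ j, v j ^ 2 := by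
    simp [Finset.mul_sum, mul_pow]
  rw [this, Real.sqrt_mul (sq_nonneg c), Real.sqrt_sq_eq_abs]

/-- the output map h is equivariant with respect to the actions
Υ on the reduced total space and ρ on the output space:
ρ(X, h(Ξ)) = h(Υ(X, Ξ)). -/
theorem h_equivariant (n : ℕ) (X : VSLAM n) (Ξ : Config n)
    (hX : X.IsValid) (hΞ : Ξ.IsValid) :
    rhoAct X (houtput Ξ) = houtput (Upsilon X Ξ) := by
  obtain ⟨⟨hA1, _⟩, hQ, ha⟩ := hX
  obtain ⟨⟨hP1, _⟩, _⟩ := hΞ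
  have hPt : Ξ.P.Rᵀ * Ξ.P.R = 1 := mul_eq_one_comm.mp hP1
  have hAt : X.A.Rᵀ * X.A.R = 1 := mul_eq_one_comm.mp hA1
  unfold rhoAct houtput Upsilon SE3.mul
  simp only [Output.mk.injEq]
  have cancel : ∀ (B C : Matrix (Fin 3) (Fin 3) ℝ), B * C = 1 →
      ∀ D : Matrix (Fin 3) (Fin 3) ℝ, B * (C * D) = D := by
    intro B C h D; rw [← Matrix.mul_assoc, h, Matrix.one_mul]
  have key : ∀ i,
      enorm3 (((X.a i)⁻¹ • ((Ξ.P.R * X.A.R) * (X.Q i)ᵀ * (Ξ.P.R)ᵀ).mulVec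
          (Ξ.p i - Ξ.P.x) + (Ξ.P.R.mulVec X.A.x + Ξ.P.x)) -
        (Ξ.P.R.mulVec X.A.x + Ξ.P.x)) =
      (X.a i)⁻¹ * enorm3 (Ξ.p i - Ξ.P.x) := by
    intro i
    have hM : ((Ξ.P.R * X.A.R) * (X.Q i)ᵀ * (Ξ.P.R)ᵀ)ᵀ *
        ((Ξ.P.R * X.A.R) * (X.Q i)ᵀ * (Ξ.P.R)ᵀ) = 1 := by
      simp only [Matrix.transpose_mul, Matrix.transpose_transpose,
        Matrix.mul_assoc, cancel _ _ hPt, cancel _ _ hAt,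
        cancel _ _ (hQ i).1, hP1]
    have hs : ((X.a i)⁻¹ • ((Ξ.P.R * X.A.R) * (X.Q i)ᵀ * (Ξ.P.R)ᵀ).mulVec
          (Ξ.p i - Ξ.P.x) + (Ξ.P.R.mulVec X.A.x + Ξ.P.x)) -
        (Ξ.P.R.mulVec X.A.x + Ξ.P.x)
        = (X.a i)⁻¹ • ((Ξ.P.R * X.A.R) * (X.Q i)ᵀ * (Ξ.P.R)ᵀ).mulVec
          (Ξ.p i - Ξ.P.x) := by abel
    rw [hs, enorm3_smul, enorm3_mulVec_rot _ hM,
      abs_of_pos (inv_pos.mpr (ha i))]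
  constructor
  · funext i
    rw [key i]
    have hs : ((X.a i)⁻¹ • ((Ξ.P.R * X.A.R) * (X.Q i)ᵀ * (Ξ.P.R)ᵀ).mulVec
          (Ξ.p i - Ξ.P.x) + (Ξ.P.R.mulVec X.A.x + Ξ.P.x)) -
        (Ξ.P.R.mulVec X.A.x + Ξ.P.x)
        = (X.a i)⁻¹ • ((Ξ.P.R * X.A.R) * (X.Q i)ᵀ * (Ξ.P.R)ᵀ).mulVec
          (Ξ.p i - Ξ.P.x) := by abel
    have hM2 : (Ξ.P.R * X.A.R)ᵀ * ((Ξ.P.R * X.A.R) * (X.Q i)ᵀ * (Ξ.P.R)ᵀ)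
        = (X.Q i)ᵀ * Ξ.P.Rᵀ := by
      simp only [Matrix.transpose_mul, Matrix.mul_assoc,
        cancel _ _ hPt, cancel _ _ hAt]
    rw [hs, Matrix.mulVec_smul, Matrix.mulVec_smul, Matrix.mulVec_mulVec,
      Matrix.mulVec_mulVec, smul_smul, hM2]
    congr 1
    rw [mul_inv, inv_inv, mul_comm (X.a i) (enorm3 (Ξ.p i - Ξ.P.x))⁻¹,
      mul_assoc, mul_inv_cancel₀ (ne_of_gt (ha i)), mul_one]
  · funext i
    rw [key i, mul_inv, inv_inv]
end
end

section
/- Given a bearing y ∈ S², inverse depth z > 0, body velocity (Ω, V) ∈ ℝ³×ℝ³, and optical flow φ = −Ω^× y − z(I − yyᵀ)V, the lifted landmark velocities W := (φ × y)^× ∈ so(3) and w := z yᵀ V ∈ ℝ satisfy: −w z^{-1} y + (Ω^× − W) z^{-1} y + V = 0. -/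
open Matrix Filter

noncomputable section

/-- the algebraic core of the lift condition.  Given a unit
bearing y, positive inverse depth z, body velocity (Ω,V) and optical flow
φ = −Ω^× y − z(I − yyᵀ)V, the lifted velocities W = (φ × y)^× and w = z yᵀ V
satisfy  −w z⁻¹ y + (Ω^× − W) z⁻¹ y + V = 0. -/
theorem lift_identity (y V Ω φ : Fin 3 → ℝ) (z : ℝ)
    (hy : ∑ j, y j ^ 2 = 1) (hz : 0 < z)
    (hφ : φ = -(skew Ω).mulVec y
        - z • (((1 : Matrix (Fin 3) (Fin 3) ℝ) - vecMulVec y y).mulVec V)) :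
    (-(z * ∑ j, y j * V j) * z⁻¹) • y
      + (skew Ω - skew (cross3 φ y)).mulVec (z⁻¹ • y) + V = 0 := by
  subst hφ
  have hz' : z ≠ 0 := ne_of_gt hz
  have h1 : y 0 ^ 2 + y 1 ^ 2 + y 2 ^ 2 = 1 := by rw [Fin.sum_univ_three] at hy; linarith
  funext i
  fin_cases i
  · simp [skew, cross3, vecMulVec, mulVec, dotProduct, Fin.sum_univ_succ, Matrix.one_apply,
      smul_eq_mul, vecHead, vecTail]
    field_simp
    linear_combination (-(V 0 * z) + y 1 * Ω 2 - y 2 * Ω 1) * h1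
  · simp [skew, cross3, vecMulVec, mulVec, dotProduct, Fin.sum_univ_succ, Matrix.one_apply,
      smul_eq_mul, vecHead, vecTail]
    field_simp
    linear_combination (-(V 1 * z) + y 2 * Ω 0 - y 0 * Ω 2) * h1
  · simp [skew, cross3, vecMulVec, mulVec, dotProduct, Fin.sum_univ_succ, Matrix.one_apply,
      smul_eq_mul, vecHead, vecTail]
    field_simp
    linear_combination (-(V 2 * z) + y 0 * Ω 1 - y 1 * Ω 0) * h1
end
end

section
/- Almost-global asymptotic stability of the error system: for the coupled system ė_{y_i} = k_{Q_i}((ẙ_i × e_{y_i}) × e_{y_i}) (i.e. ė_{y_i} = −Δ_Q^i e_{y_i} with Δ_Q^i = −k_{Q_i}(e_{y_i} × ẙ_i)^×) and ė_{z_i} = −k_{a_i}(e_{z_i} − z̊_i), with k_{Q_i}, k_{a_i} > 0, any solution with initial condition satisfying e_{y_i}(0) ≠ −ẙ_i and e_{z_i}(0) > 0 for all i converges asymptotically to (e_{y_i}, e_{z_i}) = (ẙ_i, z̊_i) as t → ∞. -/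
open Matrix Filter

noncomputable section

/-- Lagrange identity specialization: `((e × y) × e) · y = |e|²|y|² − (e·y)²`. -/
lemma cross_identity_aux (e y : Fin 3 → ℝ) :
    ∑ j, cross3 (cross3 e y) e j * y j
      = (∑ j, e j ^ 2) * (∑ j, y j ^ 2) - (∑ j, e j * y j) ^ 2 := by
  simp [cross3, Fin.sum_univ_three]
  ring

/-- almost-global asymptotic stability of the error system.
For ė_{y_i} = −Δ_Q^i e_{y_i} with Δ_Q^i = −k_{Q_i}(e_{y_i} × ẙ_i)^× (i.e.
ė_{y_i} = k_{Q_i}((e_{y_i} × ẙ_i) × e_{y_i})) and ė_{z_i} = −k_{a_i}(e_{z_i} − z̊_i),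
any solution on the sphere with e_{y_i}(0) ≠ −ẙ_i and e_{z_i}(0) > 0 converges
to (ẙ_i, z̊_i) as t → ∞. -/
theorem error_system_almost_global_stability (n : ℕ)
    (kQ ka : Fin n → ℝ) (yr : Fin n → Fin 3 → ℝ) (zr : Fin n → ℝ)
    (eY : Fin n → ℝ → Fin 3 → ℝ) (eZ : Fin n → ℝ → ℝ)
    (hkQ : ∀ i, 0 < kQ i) (hka : ∀ i, 0 < ka i)
    (hyr : ∀ i, ∑ j, yr i j ^ 2 = 1) (hzr : ∀ i, 0 < zr i)
    (heY : ∀ i t, ∑ j, eY i t j ^ 2 = 1)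
    (hdynY : ∀ i, ∀ t : ℝ, ∀ j,
      HasDerivAt (fun s => eY i s j)
        (kQ i * cross3 (cross3 (eY i t) (yr i)) (eY i t) j) t)
    (hdynZ : ∀ i, ∀ t : ℝ,
      HasDerivAt (fun s => eZ i s) (-(ka i) * (eZ i t - zr i)) t)
    (hY0 : ∀ i, eY i 0 ≠ -(yr i)) (hZ0 : ∀ i, 0 < eZ i 0) :
    ∀ i, Tendsto (fun t => eY i t) atTop (nhds (yr i)) ∧
      Tendsto (fun t => eZ i t) atTop (nhds (zr i)) := by
  intro i
  constructor
  · -- the bearing part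
    set y : Fin 3 → ℝ := yr i with hy
    set f : ℝ → ℝ := fun t => ∑ j, eY i t j * y j with hfdef
    have hf' : ∀ t, HasDerivAt f (kQ i * (1 - f t ^ 2)) t := by
      intro t
      have h : HasDerivAt (fun s => ∑ j, eY i s j * y j)
          (∑ j, kQ i * cross3 (cross3 (eY i t) y) (eY i t) j * y j) t :=
        HasDerivAt.fun_sum (fun j _ => (hdynY i t j).mul_const (y j))
      have hst : (∑ j, kQ i * cross3 (cross3 (eY i t) y) (eY i t) j * y j)
          = kQ i * (1 - f t ^ 2) := by
        have key := cross_identity_aux (eY i t) y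
        have h1 : (∑ j, kQ i * cross3 (cross3 (eY i t) y) (eY i t) j * y j)
            = kQ i * ∑ j, cross3 (cross3 (eY i t) y) (eY i t) j * y j := by
          rw [Finset.mul_sum]; exact Finset.sum_congr rfl (fun j _ => by ring)
        rw [h1, key, heY i t, hy, hyr i, hfdef]
        ring
      rw [hst] at h
      exact h
    have hbound : ∀ t, f t ^ 2 ≤ 1 := by
      intro t
      have := Finset.sum_mul_sq_le_sq_mul_sq Finset.univ (eY i t) y
      rw [heY i t] at this
      rw [hy] at this
      rw [hyr i] at this
      simpa [hfdef] using this
    have hf_le : ∀ t, f t ≤ 1 := fun t => by nlinarith [hbound t]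
    have hf_ge : ∀ t, -1 ≤ f t := fun t => by nlinarith [hbound t]
    have hdiff : Differentiable ℝ f := fun t => (hf' t).differentiableAt
    have hderiv : ∀ t, deriv f t = kQ i * (1 - f t ^ 2) := fun t => (hf' t).deriv
    have hmono : Monotone f := by
      apply monotone_of_deriv_nonneg hdiff
      intro t
      rw [hderiv t]
      have := hbound t
      nlinarith [(hkQ i).le]
    have hf0 : -1 < f 0 := by
      rcases lt_or_eq_of_le (hf_ge 0) with h | h
      · exact h
      · exfalso
        apply hY0 i
        have hsum : ∑ j, (eY i 0 j + y j) ^ 2 = 0 := by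
          have e1 := heY i 0
          have e2 : (∑ j, y j ^ 2) = 1 := by rw [hy]; exact hyr i
          have e3 : (∑ j, eY i 0 j * y j) = -1 := h.symm
          simp only [Fin.sum_univ_three] at e1 e2 e3 ⊢
          nlinarith [e1, e2, e3]
        have hzero : ∀ j ∈ Finset.univ, (eY i 0 j + y j) ^ 2 = 0 :=
          (Finset.sum_eq_zero_iff_of_nonneg (fun j _ => sq_nonneg _)).1 hsum
        funext j
        have := hzero j (Finset.mem_univ j)
        have h2 : eY i 0 j + y j = 0 := by
          have := sq_eq_zero_iff.1 this
          exact this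
        simp only [Pi.neg_apply]
        rw [hy] at h2
        linarith
    have hBdd : BddAbove (Set.range f) := ⟨1, by rintro _ ⟨t, rfl⟩; exact hf_le t⟩
    have hLf : Tendsto f atTop (nhds (⨆ t, f t)) := tendsto_atTop_ciSup hmono hBdd
    set L : ℝ := ⨆ t, f t with hLdef
    have hfleL : ∀ t, f t ≤ L := fun t => le_ciSup hBdd t
    have hL_le : L ≤ 1 := ciSup_le hf_le
    have h0L : f 0 ≤ L := hfleL 0
    have hL1 : L = 1 := by
      by_contra hne
      have hL : L < 1 := lt_of_le_of_ne hL_le hne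
      set c : ℝ := kQ i * min (1 - f 0 ^ 2) (1 - L ^ 2) with hcdef
      have hc : 0 < c := by
        apply mul_pos (hkQ i)
        apply lt_min
        · nlinarith [hf_le 0]
        · nlinarith [hf0]
      set g : ℝ → ℝ := fun t => f t - c * t with hgdef
      have hg' : ∀ t, HasDerivAt g (kQ i * (1 - f t ^ 2) - c) t := by
        intro t
        have h2 : HasDerivAt (fun s : ℝ => c * s) (c * 1) t :=
          (hasDerivAt_id t).const_mul c
        have h3 := (hf' t).sub h2
        rw [mul_one] at h3
        exact h3
      have hgmono : MonotoneOn g (Set.Ici (0 : ℝ)) := by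
        apply monotoneOn_of_deriv_nonneg (convex_Ici 0)
        · exact (Differentiable.continuous (fun t => (hg' t).differentiableAt)).continuousOn
        · exact fun t _ => ((hg' t).differentiableAt).differentiableWithinAt
        · intro t ht
          rw [interior_Ici] at ht
          rw [(hg' t).deriv]
          have hft_ge : f 0 ≤ f t := hmono ht.le
          have hft_le : f t ≤ L := hfleL t
          have hmin : min (1 - f 0 ^ 2) (1 - L ^ 2) ≤ 1 - f t ^ 2 := by
            rcases le_total (f t) 0 with h | h
            · have h2 : f t ^ 2 ≤ f 0 ^ 2 := by nlinarith
              calc min (1 - f 0 ^ 2) (1 - L ^ 2) ≤ 1 - f 0 ^ 2 := min_le_left _ _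
                _ ≤ 1 - f t ^ 2 := by linarith
            · have h2 : f t ^ 2 ≤ L ^ 2 := by nlinarith
              calc min (1 - f 0 ^ 2) (1 - L ^ 2) ≤ 1 - L ^ 2 := min_le_right _ _
                _ ≤ 1 - f t ^ 2 := by linarith
          have : c ≤ kQ i * (1 - f t ^ 2) := by
            rw [hcdef]
            exact mul_le_mul_of_nonneg_left hmin (hkQ i).le
          linarith
      set T : ℝ := max 1 ((L + 1 - f 0) / c) with hTdef
      have hT0 : (0 : ℝ) ≤ T := le_trans zero_le_one (le_max_left _ _)
      have hgT : g 0 ≤ g T := hgmono Set.self_mem_Ici hT0 hT0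
      have hcT : L + 1 - f 0 ≤ c * T := by
        rw [hTdef]
        rw [mul_comm]
        rw [← div_le_iff₀ hc]
        exact le_max_right _ _
      have : f 0 ≤ f T - c * T := by simpa [hgdef] using hgT
      have hcontr : L < f T := by linarith
      exact absurd (hfleL T) (not_le.2 hcontr)
    rw [hL1] at hLf
    rw [tendsto_pi_nhds]
    intro j
    have hsq : ∀ t, (eY i t j - y j) ^ 2 ≤ 2 - 2 * f t := by
      intro t
      have expand : ∑ j', (eY i t j' - y j') ^ 2 = 2 - 2 * f t := by
        have e1 := heY i t
        have e2 : (∑ j', y j' ^ 2) = 1 := by rw [hy]; exact hyr i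
        have e3 : f t = ∑ j', eY i t j' * y j' := rfl
        simp only [Fin.sum_univ_three] at e1 e2 ⊢
        rw [e3]
        simp only [Fin.sum_univ_three]
        nlinarith [e1, e2]
      calc (eY i t j - y j) ^ 2 ≤ ∑ j', (eY i t j' - y j') ^ 2 :=
            Finset.single_le_sum (f := fun j' => (eY i t j' - y j') ^ 2)
              (fun j' _ => sq_nonneg _) (Finset.mem_univ j)
        _ = 2 - 2 * f t := expand
    have hdiff0 : Tendsto (fun t => eY i t j - y j) atTop (nhds 0) := by
      apply squeeze_zero_norm (a := fun t => Real.sqrt (2 - 2 * f t))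
      · intro t
        rw [Real.norm_eq_abs, ← Real.sqrt_sq_eq_abs]
        exact Real.sqrt_le_sqrt (hsq t)
      · have hb : Tendsto (fun t => 2 - 2 * f t) atTop (nhds (2 - 2 * 1)) :=
          tendsto_const_nhds.sub (hLf.const_mul 2)
        have := (Real.continuous_sqrt.tendsto (2 - 2 * 1)).comp hb
        simpa [Function.comp_def] using this
    have := hdiff0.add (tendsto_const_nhds (x := y j) (f := atTop))
    simpa using this
  · -- the inverse depth part
    set k : ℝ := ka i with hk
    have hg : ∀ t, HasDerivAt (fun s => (eZ i s - zr i) * Real.exp (k * s)) 0 t := by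
      intro t
      have h1 : HasDerivAt (fun s => eZ i s - zr i) (-k * (eZ i t - zr i)) t :=
        (hdynZ i t).sub_const _
      have h2 : HasDerivAt (fun s : ℝ => Real.exp (k * s))
          (Real.exp (k * t) * (k * 1)) t :=
        ((hasDerivAt_id t).const_mul k).exp
      have := h1.mul h2
      exact this.congr_deriv (by ring)
    have hconst : ∀ t, (eZ i t - zr i) * Real.exp (k * t) = eZ i 0 - zr i := by
      intro t
      have := is_const_of_deriv_eq_zero
        (f := fun s => (eZ i s - zr i) * Real.exp (k * s))
        (fun x => (hg x).differentiableAt) (fun x => (hg x).deriv) t 0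
      simpa using this
    have heq : ∀ t, eZ i t = zr i + (eZ i 0 - zr i) * Real.exp (-(k * t)) := by
      intro t
      have h := hconst t
      have hexp : Real.exp (k * t) ≠ 0 := (Real.exp_pos _).ne'
      rw [Real.exp_neg]
      field_simp
      linarith [h]
    have hexp0 : Tendsto (fun t : ℝ => Real.exp (-(k * t))) atTop (nhds 0) := by
      apply Real.tendsto_exp_atBot.comp
      apply tendsto_neg_atBot_iff.mpr
      exact Tendsto.const_mul_atTop (hka i) tendsto_id
    have hlim : Tendsto (fun t => zr i + (eZ i 0 - zr i) * Real.exp (-(k * t)))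
        atTop (nhds (zr i + (eZ i 0 - zr i) * 0)) :=
      tendsto_const_nhds.add (hexp0.const_mul _)
    have := hlim.congr (fun t => (heq t).symm)
    simpa using this
end
end
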